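/- arXiv:1702.03150 — 4 statements merged into one kernel-verified Lean document; each statement's English description precedes it below -/
import Mathlib

section
/- Let G be a finite group and H ⊆ K subgroups of G. Then Pr(H,Aut(K)) ≥ |L(H,Aut(K))|/|H| + |C_{Aut(K)}(H)|·(|H| − |L(H,Aut(K))|)/(|H|·|Aut(K)|). -/
open scoped Pointwise Classical

section AutoCommuting

variable {G : Type*} [Group G]

/-- The set of pairs `(x, α) ∈ H × Aut(K)` whose autocommutator `[x,α] = x⁻¹ α(x)` equals `g`. -/
def autPairs (H K : Subgroup G) (hHK : H ≤ K) (g : G) : Set (↥H × MulAut ↥K) :=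
  {p | ((p.1 : G))⁻¹ * ((p.2 ⟨(p.1 : G), hHK p.1.2⟩ : ↥K) : G) = g}

/-- The generalized autocommuting probability `Pr_g(H, Aut(K))`. -/
noncomputable def prAut (H K : Subgroup G) (hHK : H ≤ K) (g : G) : ℚ :=
  (Nat.card (autPairs H K hHK g) : ℚ) /
    ((Nat.card ↥H : ℚ) * (Nat.card (MulAut ↥K) : ℚ))

/-- The orbit `orb_K(x)` of `x ∈ K` under the natural action of `Aut(K)` on `K`. -/
def orbK (K : Subgroup G) (x : ↥K) : Set ↥K := MulAction.orbit (MulAut ↥K) x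

/-- `C_{Aut(K)}(x)`, the set of automorphisms of `K` fixing `x`. -/
def centAut (K : Subgroup G) (x : ↥K) : Set (MulAut ↥K) := {α | α x = x}

/-- `C_{Aut(K)}(H)`, the set of automorphisms of `K` fixing every element of `H`. -/
def centAutH (H K : Subgroup G) (hHK : H ≤ K) : Set (MulAut ↥K) :=
  {α | ∀ x : ↥H, α ⟨(x : G), hHK x.2⟩ = ⟨(x : G), hHK x.2⟩}

/-- `L(H, Aut(K)) = {x ∈ H : [x,α] = 1 for all α ∈ Aut(K)}`, as a subgroup of `H`. -/
def absCent (H K : Subgroup G) (hHK : H ≤ K) : Subgroup ↥H where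
  carrier := {x | ∀ α : MulAut ↥K, α ⟨(x : G), hHK x.2⟩ = ⟨(x : G), hHK x.2⟩}
  one_mem' := by
    intro α
    have h1 : (⟨((1 : ↥H) : G), hHK (1 : ↥H).2⟩ : ↥K) = 1 := rfl
    rw [h1, map_one]
  mul_mem' := by
    intro a b ha hb α
    have h1 : (⟨((a * b : ↥H) : G), hHK (a * b).2⟩ : ↥K)
        = ⟨(a : G), hHK a.2⟩ * ⟨(b : G), hHK b.2⟩ := rfl
    rw [h1, map_mul, ha α, hb α]
  inv_mem' := by
    intro a ha α
    have h1 : (⟨((a⁻¹ : ↥H) : G), hHK (a⁻¹).2⟩ : ↥K) = (⟨(a : G), hHK a.2⟩ : ↥K)⁻¹ := rfl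
    rw [h1, map_inv, ha α]

theorem mem_absCent {H K : Subgroup G} {hHK : H ≤ K} {x : ↥H} :
    x ∈ absCent H K hHK ↔ ∀ α : MulAut ↥K, α ⟨(x : G), hHK x.2⟩ = ⟨(x : G), hHK x.2⟩ :=
  Iff.rfl

/-- `S(H, Aut(K)) = {[x,α] : x ∈ H, α ∈ Aut(K)}`, as a subset of `K`. -/
def autCommSet (H K : Subgroup G) (hHK : H ≤ K) : Set ↥K :=
  {k | ∃ x : ↥H, ∃ α : MulAut ↥K,
    (⟨(x : G), hHK x.2⟩ : ↥K)⁻¹ * α ⟨(x : G), hHK x.2⟩ = k}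

end AutoCommuting

/-! Every `x ∈ L(H, Aut(K))` is fixed by all of `Aut(K)`, and every `x ∈ H ∖ L(H, Aut(K))` is still
fixed by every element of `C_{Aut(K)}(H)`; counting the pairs `(x, α)` with `α(x) = x` along this
split gives the bound. -/

theorem Set.ncard_mul_add_le_ncard_setOf_rel {α β : Type*} [Finite α] [Finite β]
    (R : α → β → Prop) (A : Set α) (B : Set β) (hA : ∀ a ∈ A, ∀ b, R a b)
    (hB : ∀ b ∈ B, ∀ a, R a b) :
    A.ncard * Nat.card β + (Nat.card α - A.ncard) * B.ncard ≤
      {p : α × β | R p.1 p.2}.ncard := by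
  have hsub : A ×ˢ Set.univ ∪ Aᶜ ×ˢ B ⊆ {p : α × β | R p.1 p.2} := by
    rintro ⟨a, b⟩ (⟨ha, -⟩ | ⟨-, hb⟩)
    exacts [hA a ha b, hB b hb a]
  have hdisj : Disjoint (A ×ˢ (Set.univ : Set β)) (Aᶜ ×ˢ B) :=
    Set.disjoint_prod.2 (Or.inl disjoint_compl_right)
  calc A.ncard * Nat.card β + (Nat.card α - A.ncard) * B.ncard
      = (A ×ˢ Set.univ ∪ Aᶜ ×ˢ B).ncard := by
        rw [Set.ncard_union_eq hdisj, Set.ncard_prod, Set.ncard_prod, Set.ncard_univ,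
          Set.ncard_compl]
    _ ≤ _ := Set.ncard_le_ncard hsub

theorem mem_autPairs_one_iff {G : Type*} [Group G] {H K : Subgroup G} {hHK : H ≤ K}
    {p : ↥H × MulAut ↥K} :
    p ∈ autPairs H K hHK 1 ↔ p.2 ⟨p.1, hHK p.1.2⟩ = ⟨p.1, hHK p.1.2⟩ := by
  rw [autPairs, Set.mem_ofPred_eq, inv_mul_eq_one, eq_comm, Subtype.ext_iff]

theorem card_absCent_mul_add_le_card_autPairs_one {G : Type*} [Group G] {H K : Subgroup G}
    (hHK : H ≤ K) [Finite ↥K] :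
    Nat.card (absCent H K hHK) * Nat.card (MulAut ↥K) +
        (Nat.card ↥H - Nat.card (absCent H K hHK)) * Nat.card (centAutH H K hHK) ≤
      Nat.card (autPairs H K hHK 1) := by
  have : Finite ↥H := Finite.of_injective _ (Subgroup.inclusion_injective hHK)
  have hpairs : {p : ↥H × MulAut ↥K | p.2 ⟨p.1, hHK p.1.2⟩ = ⟨p.1, hHK p.1.2⟩} =
      autPairs H K hHK 1 := Set.ext fun _ => mem_autPairs_one_iff.symm
  have hcount := Set.ncard_mul_add_le_ncard_setOf_rel (fun (x : ↥H) (α : MulAut ↥K) =>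
    α ⟨x, hHK x.2⟩ = ⟨x, hHK x.2⟩) (absCent H K hHK : Set ↥H) (centAutH H K hHK)
    (fun _ hx α => hx α) (fun _ hα x => hα x)
  rw [hpairs, ← Nat.card_coe_set_eq, ← Nat.card_coe_set_eq, ← Nat.card_coe_set_eq] at hcount
  exact hcount

/-- Lower bound for `Pr(H, Aut(K))` in terms of `L(H,Aut(K))` and `C_{Aut(K)}(H)`. -/
theorem stmt_7 {G : Type*} [Group G] [Fintype G] (H K : Subgroup G) (hHK : H ≤ K) :
    prAut H K hHK 1 ≥
      (Nat.card (absCent H K hHK) : ℚ) / (Nat.card ↥H : ℚ) +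
        (Nat.card (centAutH H K hHK) : ℚ) *
            ((Nat.card ↥H : ℚ) - (Nat.card (absCent H K hHK) : ℚ)) /
          ((Nat.card ↥H : ℚ) * (Nat.card (MulAut ↥K) : ℚ)) := by
  have hcount : (Nat.card (absCent H K hHK) : ℚ) * Nat.card (MulAut ↥K) +
      (Nat.card ↥H - Nat.card (absCent H K hHK)) * Nat.card (centAutH H K hHK) ≤
      Nat.card (autPairs H K hHK 1) := by
    rw [← Nat.cast_sub (Subgroup.card_le_card_group _)]
    exact_mod_cast card_absCent_mul_add_le_card_autPairs_one hHK
  have hH : (Nat.card ↥H : ℚ) ≠ 0 := by exact_mod_cast Nat.card_pos.ne'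
  have hAut : (Nat.card (MulAut ↥K) : ℚ) ≠ 0 := by exact_mod_cast Nat.card_pos.ne'
  rw [ge_iff_le, prAut]
  calc _ = ((Nat.card (absCent H K hHK) : ℚ) * Nat.card (MulAut ↥K) +
        (Nat.card ↥H - Nat.card (absCent H K hHK)) * Nat.card (centAutH H K hHK)) /
        (Nat.card ↥H * Nat.card (MulAut ↥K)) := by field_simp
    _ ≤ _ := by gcongr
end

section
/- Let G be a finite group, H ⊆ K subgroups of G, and g ∈ K. Then Pr_g(H,Aut(K)) ≤ Pr(H,Aut(K)), with equality if and only if g = 1. -/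
open scoped Pointwise Classical

/-!
For a fixed automorphism `α`, two solutions `x, y ∈ H` of `[x,α] = g` differ by `x y⁻¹`, which
`α` fixes; so the solutions lie in one coset of `C_H(α) = {x ∈ H : [x,α] = 1}`, and summing over
`α` gives `Pr_g ≤ Pr_1`. For `α = id` every `x` solves `[x,α] = 1` but none solves `[x,α] = g ≠ 1`,
which makes the inequality strict.
-/

theorem Subgroup.natCard_le_of_forall_mul_inv_mem {A : Type*} [Group A] (L : Subgroup A)
    [Finite L] {S : Set A} (hS : ∀ x ∈ S, ∀ y ∈ S, x * y⁻¹ ∈ L) : Nat.card S ≤ Nat.card L := by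
  rcases S.eq_empty_or_nonempty with rfl | ⟨y, hy⟩
  · simp
  · refine Nat.card_le_card_of_injective (fun x => ⟨x * y⁻¹, hS x x.2 y hy⟩) fun x x' h => ?_
    exact Subtype.ext (mul_right_cancel (congrArg Subtype.val h))

theorem map_mul_inv_eq_of_inv_mul_map_eq {B F : Type*} [Group B] [FunLike F B B]
    [MonoidHomClass F B B] (φ : F) {a b : B} (h : a⁻¹ * φ a = b⁻¹ * φ b) :
    φ (a * b⁻¹) = a * b⁻¹ := by
  rw [inv_mul_eq_iff_eq_mul, ← mul_assoc] at h
  rw [map_mul, map_inv, h]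
  group

section AutoCommuting

variable {G : Type*} [Group G] {H K : Subgroup G} (hHK : H ≤ K)

def autFiber (g : G) (α : MulAut K) : Set H := {x | (x, α) ∈ autPairs H K hHK g}

def autPairsEquivSigma (g : G) : autPairs H K hHK g ≃ Σ α : MulAut K, autFiber hHK g α where
  toFun p := ⟨p.1.2, p.1.1, p.2⟩
  invFun q := ⟨(q.2.1, q.1), q.2.2⟩

def autFixedSubgroup (α : MulAut K) : Subgroup H :=
  ((α : K →* K).comp (Subgroup.inclusion hHK)).eqLocus (Subgroup.inclusion hHK)

theorem autFiber_one (α : MulAut K) : autFiber hHK 1 α = autFixedSubgroup hHK α := by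
  ext x
  simp only [autFiber, autPairs, Set.mem_ofPred_eq, inv_mul_eq_one, eq_comm (a := (x : G))]
  exact (Subtype.ext_iff (a1 := α (Subgroup.inclusion hHK x)) (a2 := Subgroup.inclusion hHK x)).symm

theorem mul_inv_mem_of_mem_autFiber {g : G} {α : MulAut K} {x y : H} (hx : x ∈ autFiber hHK g α)
    (hy : y ∈ autFiber hHK g α) : x * y⁻¹ ∈ autFixedSubgroup hHK α :=
  map_mul_inv_eq_of_inv_mul_map_eq α (a := Subgroup.inclusion hHK x) (b := Subgroup.inclusion hHK y)
    (Subtype.ext (hx.trans hy.symm))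

theorem natCard_autFiber_le [Finite H] (g : G) (α : MulAut K) :
    Nat.card (autFiber hHK g α) ≤ Nat.card (autFiber hHK 1 α) := by
  rw [autFiber_one]
  exact (autFixedSubgroup hHK α).natCard_le_of_forall_mul_inv_mem
    fun x hx y hy => mul_inv_mem_of_mem_autFiber hHK hx hy

theorem autFiber_eq_empty_of_ne_one {g : G} (hg : g ≠ 1) : autFiber hHK g 1 = ∅ := by
  ext x
  simp [autFiber, autPairs, Ne.symm hg]

theorem natCard_autPairs_lt [Finite G] {g : G} (hg : g ≠ 1) :
    Nat.card (autPairs H K hHK g) < Nat.card (autPairs H K hHK 1) := by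
  have : Fintype (MulAut K) := Fintype.ofFinite _
  simp only [Nat.card_congr (autPairsEquivSigma hHK _), Nat.card_sigma]
  refine Finset.sum_lt_sum (fun α _ => natCard_autFiber_le hHK g α) ⟨1, Finset.mem_univ _, ?_⟩
  rw [autFiber_eq_empty_of_ne_one hHK hg, autFiber_one]
  simp

theorem prAut_lt_prAut_one [Finite G] {g : G} (hg : g ≠ 1) :
    prAut H K hHK g < prAut H K hHK 1 := by
  have : 0 < Nat.card H := Nat.card_pos
  have : 0 < Nat.card (MulAut K) := Nat.card_pos
  unfold prAut
  gcongr
  exact natCard_autPairs_lt hHK hg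

end AutoCommuting

theorem stmt_9_general {G : Type*} [Group G] [Fintype G] (H K : Subgroup G) (hHK : H ≤ K)
    (g : G) :
    prAut H K hHK g ≤ prAut H K hHK 1 ∧
      (prAut H K hHK g = prAut H K hHK 1 ↔ g = 1) := by
  rcases eq_or_ne g 1 with rfl | hg
  · simp
  · have hlt := prAut_lt_prAut_one hHK hg
    exact ⟨hlt.le, iff_of_false hlt.ne hg⟩

/-- `Pr_g(H,Aut(K)) ≤ Pr(H,Aut(K))`, with equality if and only if `g = 1`. -/
theorem stmt_9 {G : Type*} [Group G] [Fintype G] (H K : Subgroup G) (hHK : H ≤ K)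
    (g : G) (hg : g ∈ K) :
    prAut H K hHK g ≤ prAut H K hHK 1 ∧
      (prAut H K hHK g = prAut H K hHK 1 ↔ g = 1) :=
  stmt_9_general H K hHK g
end

section
/- Let G be a finite group, H₁ ⊆ H₂ ⊆ K subgroups of G, and g ∈ K. Then Pr_g(H₁,Aut(K)) ≤ [H₂ : H₁] · Pr_g(H₂,Aut(K)), with equality if and only if xg ∉ orb_K(x) for every x ∈ H₂ \ H₁. -/
open scoped Pointwise Classical

/-!
Including `H₁` into `H₂` embeds the `g`-autocommuting pairs of `H₁ × Aut(K)` into those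
of `H₂ × Aut(K)`, and `[H₂ : H₁] · Pr_g(H₂, Aut(K))` is the number of the latter divided by
`|H₁| · |Aut(K)|`. The embedding misses exactly the pairs `(x, α)` with `x ∈ H₂ \ H₁` and
`α(x) = xg`, and such an `α` exists precisely when `xg ∈ orb_K(x)`.
-/

section AutPairs

variable {G : Type*} [Group G] {H₁ H₂ K : Subgroup G} {g : G}

theorem mem_autPairs_iff {hHK : H₁ ≤ K} {p : ↥H₁ × MulAut ↥K} :
    p ∈ autPairs H₁ K hHK g ↔ (p.2 ⟨p.1, hHK p.1.2⟩ : G) = p.1 * g :=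
  inv_mul_eq_iff_eq_mul

theorem mk_mul_mem_orbK_iff {x : G} (hx : x ∈ K) (hg : g ∈ K) :
    (⟨x * g, mul_mem hx hg⟩ : ↥K) ∈ orbK K ⟨x, hx⟩ ↔
      ∃ α : MulAut ↥K, (α ⟨x, hx⟩ : G) = x * g := by
  simp only [orbK, MulAction.mem_orbit_iff, MulAut.smul_def, Subtype.ext_iff]

variable (h₁₂ : H₁ ≤ H₂) (h₁K : H₁ ≤ K) (h₂K : H₂ ≤ K) (g)

def autPairsOfLE : autPairs H₁ K h₁K g → autPairs H₂ K h₂K g :=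
  fun p => ⟨(Subgroup.inclusion h₁₂ p.1.1, p.1.2), p.2⟩

theorem autPairsOfLE_injective : Function.Injective (autPairsOfLE g h₁₂ h₁K h₂K) :=
  fun _ _ h => Subtype.ext <| Prod.ext
    (Subgroup.inclusion_injective h₁₂ (congrArg (·.1.1) h)) (congrArg (·.1.2) h)

theorem mem_range_autPairsOfLE_iff {p : autPairs H₂ K h₂K g} :
    p ∈ Set.range (autPairsOfLE g h₁₂ h₁K h₂K) ↔ (p.1.1 : G) ∈ H₁ := by
  refine ⟨?_, fun hp => ⟨⟨(⟨p.1.1, hp⟩, p.1.2), p.2⟩, rfl⟩⟩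
  rintro ⟨q, rfl⟩
  exact q.1.1.2

variable {g}

theorem autPairsOfLE_surjective_iff (hg : g ∈ K) :
    Function.Surjective (autPairsOfLE g h₁₂ h₁K h₂K) ↔
      ∀ x : G, (hx : x ∈ H₂) → x ∉ H₁ →
        (⟨x * g, mul_mem (h₂K hx) hg⟩ : ↥K) ∉ orbK K ⟨x, h₂K hx⟩ := by
  simp only [← Set.range_eq_univ, Set.eq_univ_iff_forall, mem_range_autPairsOfLE_iff]
  constructor
  · intro hrange x hx hx₁ horb
    obtain ⟨α, hα⟩ := (mk_mul_mem_orbK_iff (h₂K hx) hg).1 horb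
    exact hx₁ (hrange ⟨(⟨x, hx⟩, α), mem_autPairs_iff.2 hα⟩)
  · rintro hcond ⟨⟨x, α⟩, hp⟩
    by_contra hx₁
    exact hcond x x.2 hx₁ ((mk_mul_mem_orbK_iff _ hg).2 ⟨α, mem_autPairs_iff.1 hp⟩)

variable [Finite G]

theorem card_autPairs_le_of_le (g : G) (h₁₂ : H₁ ≤ H₂) (h₁K : H₁ ≤ K) (h₂K : H₂ ≤ K) :
    Nat.card (autPairs H₁ K h₁K g) ≤ Nat.card (autPairs H₂ K h₂K g) :=
  Nat.card_le_card_of_injective _ (autPairsOfLE_injective g h₁₂ h₁K h₂K)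

theorem card_autPairs_eq_iff_surjective :
    Nat.card (autPairs H₁ K h₁K g) = Nat.card (autPairs H₂ K h₂K g) ↔
      Function.Surjective (autPairsOfLE g h₁₂ h₁K h₂K) :=
  have hinj := autPairsOfLE_injective g h₁₂ h₁K h₂K
  ⟨fun h => ((Nat.bijective_iff_injective_and_card _).2 ⟨hinj, h⟩).2,
    fun h => Nat.card_eq_of_bijective _ ⟨hinj, h⟩⟩

end AutPairs

theorem Subgroup.relIndex_mul_card_of_le {G : Type*} [Group G] {H₁ H₂ : Subgroup G}
    (h : H₁ ≤ H₂) : H₁.relIndex H₂ * Nat.card H₁ = Nat.card H₂ := by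
  simpa only [Subgroup.relIndex_bot_left, mul_comm] using Subgroup.relIndex_mul_relIndex _ _ _ bot_le h

theorem relIndex_mul_prAut {G : Type*} [Group G] [Finite G] {H₁ H₂ K : Subgroup G}
    (h₁₂ : H₁ ≤ H₂) (h₂K : H₂ ≤ K) (g : G) :
    (H₁.relIndex H₂ : ℚ) * prAut H₂ K h₂K g =
      Nat.card (autPairs H₂ K h₂K g) / (Nat.card H₁ * Nat.card (MulAut K)) := by
  have hcard : (H₁.relIndex H₂ : ℚ) * Nat.card H₁ = Nat.card H₂ := by
    exact_mod_cast Subgroup.relIndex_mul_card_of_le h₁₂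
  have hindex : (H₁.relIndex H₂ : ℚ) ≠ 0 :=
    left_ne_zero_of_mul (hcard ▸ Nat.cast_ne_zero.2 Nat.card_pos.ne')
  rw [prAut, ← hcard]
  field_simp

/-- `Pr_g(H₁,Aut(K)) ≤ [H₂:H₁] Pr_g(H₂,Aut(K))`, with equality iff `xg ∉ orb_K(x)`
for every `x ∈ H₂ \ H₁`. -/
theorem stmt_11 {G : Type*} [Group G] [Fintype G] (H₁ H₂ K : Subgroup G)
    (h₁₂ : H₁ ≤ H₂) (h₂K : H₂ ≤ K) (g : G) (hg : g ∈ K) :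
    prAut H₁ K (h₁₂.trans h₂K) g ≤ (H₁.relIndex H₂ : ℚ) * prAut H₂ K h₂K g ∧
      (prAut H₁ K (h₁₂.trans h₂K) g = (H₁.relIndex H₂ : ℚ) * prAut H₂ K h₂K g ↔
        ∀ x : G, (hx : x ∈ H₂) → x ∉ H₁ →
          (⟨x * g, mul_mem (h₂K hx) hg⟩ : ↥K) ∉ orbK K ⟨x, h₂K hx⟩) := by
  have hden : (0 : ℚ) < Nat.card H₁ * Nat.card (MulAut K) := by
    have := Nat.card_pos (α := H₁); have := Nat.card_pos (α := MulAut K); positivity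
  rw [relIndex_mul_prAut h₁₂ h₂K, prAut, ← autPairsOfLE_surjective_iff h₁₂ (h₁₂.trans h₂K) h₂K hg,
    ← card_autPairs_eq_iff_surjective, div_left_inj' hden.ne', Nat.cast_inj]
  exact ⟨by gcongr; exact card_autPairs_le_of_le g h₁₂ _ h₂K, Iff.rfl⟩
end

section
/- Let G be a finite group and H ⊆ K subgroups of G with H ≠ L(H,Aut(K)). If p is the smallest prime dividing |Aut(K)| and q is the smallest prime dividing |H|, then Pr(H,Aut(K)) ≤ (p + q − 1)/(pq). In particular, if p = q then Pr(H,Aut(K)) ≤ (2p − 1)/p² ≤ 3/4. -/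
open scoped Pointwise Classical

/-! A pair `(x, α)` autocommutes exactly when `α` lies in the stabilizer of `x`, so the number of
such pairs is `∑_{x ∈ H} |C_{Aut(K)}(x)|`. For `x ∈ L(H, Aut(K))` the stabilizer is all of
`Aut(K)`; otherwise it is a proper subgroup, whose index is at least `p`. Hence
`Pr(H, Aut(K)) ≤ 1/p + (1 - 1/p) · |L|/|H|`, and `L(H, Aut(K))` is itself a proper subgroup of `H`,
so `|L|/|H| ≤ 1/q`. -/

open MulAction
open scoped Finset

theorem Subgroup.mul_card_le_card_of_ne_top {A : Type*} [Group A] [Finite A] {S : Subgroup A}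
    (hS : S ≠ ⊤) {p : ℕ} (hp : ∀ r : ℕ, r.Prime → r ∣ Nat.card A → p ≤ r) :
    p * Nat.card S ≤ Nat.card A := by
  have hindex : p ≤ S.index :=
    calc p ≤ S.index.minFac :=
          hp _ (Nat.minFac_prime (Subgroup.one_lt_index_of_ne_top hS).ne')
            ((Nat.minFac_dvd _).trans S.index_dvd_card)
      _ ≤ S.index := Nat.minFac_le (Nat.pos_of_ne_zero S.index_ne_zero_of_finite)
  calc p * Nat.card S ≤ S.index * Nat.card S := Nat.mul_le_mul_right _ hindex
    _ = Nat.card A := by rw [mul_comm, S.card_mul_index]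

section Stabilizers

variable {A X : Type*} [Group A] [Finite A] [MulAction A X] {p : ℕ}

theorem mul_card_stabilizer_le (hp : ∀ r : ℕ, r.Prime → r ∣ Nat.card A → p ≤ r) (x : X) :
    (p : ℚ) * Nat.card (stabilizer A x)
      ≤ Nat.card A * (1 + (p - 1) * if ∀ a : A, a • x = x then 1 else 0) := by
  split_ifs with hfix
  · have htop : stabilizer A x = ⊤ := (Subgroup.eq_top_iff' _).mpr hfix
    rw [htop, Subgroup.card_top]
    linarith
  · have hne : stabilizer A x ≠ ⊤ := fun htop => hfix fun a => by
      simpa using (Subgroup.eq_top_iff' _).mp htop a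
    have := Subgroup.mul_card_le_card_of_ne_top hne hp
    simpa using (Nat.cast_le (α := ℚ)).mpr this

theorem mul_sum_card_stabilizer_le {ι : Type*} [Fintype ι] (f : ι → X)
    (hp : ∀ r : ℕ, r.Prime → r ∣ Nat.card A → p ≤ r) :
    (p : ℚ) * ∑ i, Nat.card (stabilizer A (f i))
      ≤ Nat.card A * (Fintype.card ι + (p - 1) * #{i | ∀ a : A, a • f i = f i}) := by
  calc (p : ℚ) * ∑ i, Nat.card (stabilizer A (f i))
      = ∑ i, (p : ℚ) * Nat.card (stabilizer A (f i)) := by push_cast; rw [Finset.mul_sum]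
    _ ≤ ∑ i, (Nat.card A : ℚ) * (1 + (p - 1) * if ∀ a : A, a • f i = f i then 1 else 0) :=
        Finset.sum_le_sum fun i _ => mul_card_stabilizer_le hp (f i)
    _ = _ := by
        rw [← Finset.mul_sum, Finset.sum_add_distrib, ← Finset.mul_sum,
          Finset.natCast_card_filter]
        simp

end Stabilizers

section AutPairs

variable {G : Type*} [Group G] (H K : Subgroup G) (hHK : H ≤ K)

theorem card_autPairs_one [Fintype H] [Finite K] :
    Nat.card (autPairs H K hHK 1)
      = ∑ x : H, Nat.card (stabilizer (MulAut K) (Subgroup.inclusion hHK x)) := by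
  have hset : autPairs H K hHK 1
      = {xα : H × MulAut K | xα.2 • Subgroup.inclusion hHK xα.1 = Subgroup.inclusion hHK xα.1} := by
    ext ⟨x, α⟩
    simp only [autPairs, Set.mem_ofPred_eq, inv_mul_eq_one, MulAut.smul_def]
    rw [Subtype.ext_iff, Subgroup.coe_inclusion, eq_comm]
    rfl
  rw [hset, Set.coe_ofPred, Nat.card_congr (Equiv.subtypeProdEquivSigmaSubtype
    fun (x : H) (α : MulAut K) => α • Subgroup.inclusion hHK x = Subgroup.inclusion hHK x),
    Nat.card_sigma]
  rfl

theorem card_absCent [Fintype H] :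
    Nat.card (absCent H K hHK)
      = #{x : H | ∀ α : MulAut K, α • Subgroup.inclusion hHK x = Subgroup.inclusion hHK x} := by
  rw [Nat.card_eq_fintype_card, Fintype.card_subtype]
  rfl

theorem prAut_one_le [Finite G] (hne : absCent H K hHK ≠ ⊤) {p q : ℕ} (hp : 0 < p) (hq : 0 < q)
    (hpmin : ∀ r : ℕ, r.Prime → r ∣ Nat.card (MulAut K) → p ≤ r)
    (hqmin : ∀ r : ℕ, r.Prime → r ∣ Nat.card H → q ≤ r) :
    prAut H K hHK 1 ≤ ((p : ℚ) + q - 1) / (p * q) := by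
  have : Fintype H := Fintype.ofFinite H
  have hcount := mul_sum_card_stabilizer_le (Subgroup.inclusion hHK) hpmin
  rw [← card_autPairs_one, ← card_absCent, Fintype.card_eq_nat_card] at hcount
  have hL : (q : ℚ) * Nat.card (absCent H K hHK) ≤ Nat.card H := by
    exact_mod_cast Subgroup.mul_card_le_card_of_ne_top hne hqmin
  have hA : (0 : ℚ) < Nat.card (MulAut K) := by exact_mod_cast Nat.card_pos
  have hH : (0 : ℚ) < Nat.card H := by exact_mod_cast Nat.card_pos
  have hp' : (1 : ℚ) ≤ p := by exact_mod_cast hp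
  have hq' : (0 : ℚ) < q := by exact_mod_cast hq
  rw [prAut, div_le_div_iff₀ (by positivity) (by positivity)]
  nlinarith [mul_le_mul_of_nonneg_left hcount hq'.le,
    mul_le_mul_of_nonneg_left hL (mul_nonneg hA.le (sub_nonneg.mpr hp'))]

end AutPairs

theorem two_mul_sub_one_div_sq_le_three_quarters {p : ℚ} (hp : 2 ≤ p) :
    (2 * p - 1) / p ^ 2 ≤ 3 / 4 := by
  rw [div_le_div_iff₀ (by positivity) (by norm_num)]
  nlinarith

theorem stmt_15_general {G : Type*} [Group G] [Fintype G] (H K : Subgroup G) (hHK : H ≤ K)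
    (hne : absCent H K hHK ≠ ⊤)
    (p : ℕ) (hp : p.Prime)
    (hpmin : ∀ r : ℕ, r.Prime → r ∣ Nat.card (MulAut ↥K) → p ≤ r)
    (q : ℕ) (hq : q.Prime)
    (hqmin : ∀ r : ℕ, r.Prime → r ∣ Nat.card ↥H → q ≤ r) :
    prAut H K hHK 1 ≤ ((p : ℚ) + (q : ℚ) - 1) / ((p : ℚ) * (q : ℚ)) ∧
      (p = q →
        prAut H K hHK 1 ≤ (2 * (p : ℚ) - 1) / ((p : ℚ) ^ 2) ∧
          (2 * (p : ℚ) - 1) / ((p : ℚ) ^ 2) ≤ 3 / 4) := by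
  have hbound := prAut_one_le H K hHK hne hp.pos hq.pos hpmin hqmin
  refine ⟨hbound, fun hpq => ⟨?_, two_mul_sub_one_div_sq_le_three_quarters ?_⟩⟩
  · subst hpq
    convert hbound using 1
    ring
  · exact_mod_cast hp.two_le

/-- If `p`, `q` are the smallest primes dividing `|Aut(K)|` and `|H|` respectively, then
`Pr(H,Aut(K)) ≤ (p+q-1)/(pq)`; in particular if `p = q` then
`Pr(H,Aut(K)) ≤ (2p-1)/p² ≤ 3/4`. -/
theorem stmt_15 {G : Type*} [Group G] [Fintype G] (H K : Subgroup G) (hHK : H ≤ K)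
    (hne : absCent H K hHK ≠ ⊤)
    (p : ℕ) (hp : p.Prime) (hpdvd : p ∣ Nat.card (MulAut ↥K))
    (hpmin : ∀ r : ℕ, r.Prime → r ∣ Nat.card (MulAut ↥K) → p ≤ r)
    (q : ℕ) (hq : q.Prime) (hqdvd : q ∣ Nat.card ↥H)
    (hqmin : ∀ r : ℕ, r.Prime → r ∣ Nat.card ↥H → q ≤ r) :
    prAut H K hHK 1 ≤ ((p : ℚ) + (q : ℚ) - 1) / ((p : ℚ) * (q : ℚ)) ∧
      (p = q →
        prAut H K hHK 1 ≤ (2 * (p : ℚ) - 1) / ((p : ℚ) ^ 2) ∧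
          (2 * (p : ℚ) - 1) / ((p : ℚ) ^ 2) ≤ 3 / 4) :=
  stmt_15_general H K hHK hne p hp hpmin q hq hqmin
end
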